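/- arXiv:1408.0822 — 2 statements merged into one kernel-verified Lean document; each statement's English description precedes it below -/
import Mathlib

section
/- Let X be a Markov chain with finite state space S of size n, and let x and y be any two states. Then for all integers t > n, the probability that the first visit to y occurs exactly at time t satisfies P_x(τ(y) = t) ≤ n/t; consequently P_x(S_t) ≤ n²/t. -/
open Finset

/-- A (row-)stochastic transition matrix: the transition kernel of a Markov chain
on the finite state space `S`. -/
def IsStochastic {S : Type*} [Fintype S] (p : Matrix S S ℝ) : Prop :=
  (∀ a b, 0 ≤ p a b) ∧ ∀ a, ∑ b, p a b = 1

/-- The probability weight of a finite trajectory `z 0, z 1, …, z m` of the chain. -/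
noncomputable def pathWeight {S : Type*} (p : Matrix S S ℝ) {m : ℕ} (z : Fin (m + 1) → S) : ℝ :=
  ∏ i : Fin m, p (z i.castSucc) (z i.succ)

open scoped Classical in
/-- `P_x(A)` for an event `A` depending on the trajectory `X_0, X_1, …, X_m`
of the chain started at `x`. -/
noncomputable def eventProb {S : Type*} [Fintype S] (p : Matrix S S ℝ) (x : S) (m : ℕ)
    (A : (Fin (m + 1) → S) → Prop) : ℝ :=
  ∑ z : Fin (m + 1) → S, if z 0 = x ∧ A z then pathWeight p z else 0

/-- `P_x(τ(y) = t)`: the probability that the chain started at `x` first visits `y`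
exactly at time `t`. -/
noncomputable def hitProbEq {S : Type*} [Fintype S] (p : Matrix S S ℝ) (x y : S) (t : ℕ) : ℝ :=
  eventProb p x t fun z => z (Fin.last t) = y ∧ ∀ i : Fin (t + 1), (i : ℕ) < t → z i ≠ y

/-- `P_x(S_t)`: the probability that the state visited at time `t` was not visited
at any earlier time. -/
noncomputable def surpriseProb {S : Type*} [Fintype S] (p : Matrix S S ℝ) (x : S) (t : ℕ) : ℝ :=
  eventProb p x t fun z => ∀ i : Fin (t + 1), (i : ℕ) < t → z i ≠ z (Fin.last t)

/-! For every `s < t`, the Markov property at time `s` gives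
`P_x(τ(y) = t) ≤ ∑_w P_w(τ(y) = t - s)`. Summing over the `t` values of `s` bounds
`t · P_x(τ(y) = t)` by `∑_w P_w(1 ≤ τ(y) ≤ t) ≤ n`. Since `S_t` is the disjoint union over `y`
of the events `{τ(y) = t}`, the bound for `P_x(S_t)` follows. -/

theorem IsStochastic.sum_mul_le {S : Type*} [Fintype S] {p : Matrix S S ℝ}
    (hp : IsStochastic p) (a : S) {f : S → ℝ} {C : ℝ} (hf : ∀ b, f b ≤ C) :
    ∑ b, p a b * f b ≤ C :=
  calc ∑ b, p a b * f b ≤ ∑ b, p a b * C :=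
        sum_le_sum fun b _ => mul_le_mul_of_nonneg_left (hf b) (hp.1 a b)
    _ = C := by rw [← sum_mul, hp.2 a, one_mul]

section PathWeight

variable {S : Type*} {p : Matrix S S ℝ}

theorem pathWeight_nonneg (hp : ∀ a b, 0 ≤ p a b) {m : ℕ} (z : Fin (m + 1) → S) :
    0 ≤ pathWeight p z :=
  prod_nonneg fun _ _ => hp _ _

theorem pathWeight_cons {m : ℕ} (a : S) (u : Fin (m + 1) → S) :
    pathWeight p (Fin.cons a u) = p a (u 0) * pathWeight p u := by
  simp [pathWeight, Fin.prod_univ_succ]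

end PathWeight

section EventProb

open scoped Classical

variable {S : Type*} [Fintype S] {p : Matrix S S ℝ} {x : S} {m : ℕ}

theorem eventProb_nonneg (hp : ∀ a b, 0 ≤ p a b) (A : (Fin (m + 1) → S) → Prop) :
    0 ≤ eventProb p x m A :=
  sum_nonneg fun z _ => by
    split
    · exact pathWeight_nonneg hp z
    · exact le_rfl

theorem eventProb_congr {A B : (Fin (m + 1) → S) → Prop} (h : ∀ z, z 0 = x → (A z ↔ B z)) :
    eventProb p x m A = eventProb p x m B :=
  sum_congr rfl fun z _ => by
    by_cases hz : z 0 = x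
    · simp [hz, h z hz]
    · simp [hz]

theorem eventProb_eq_zero {A : (Fin (m + 1) → S) → Prop} (h : ∀ z, z 0 = x → ¬A z) :
    eventProb p x m A = 0 :=
  sum_eq_zero fun z _ => if_neg fun hz => h z hz.1 hz.2

theorem eventProb_zero (A : (Fin 1 → S) → Prop) :
    eventProb p x 0 A = if A (fun _ => x) then 1 else 0 := by
  rw [eventProb, ← (Equiv.funUnique (Fin 1) S).symm.sum_comp]
  simp [pathWeight, ite_and, sum_ite_eq']
  rfl

theorem eventProb_succ (A : (Fin (m + 2) → S) → Prop) :
    eventProb p x (m + 1) A = ∑ v, p x v * eventProb p v m (fun u => A (Fin.cons x u)) := by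
  rw [eventProb, ← (Fin.consEquiv fun _ : Fin (m + 2) => S).sum_comp, Fintype.sum_prod_type]
  simp only [Fin.consEquiv, Equiv.coe_fn_mk, Fin.cons_zero, pathWeight_cons, ite_and,
    sum_ite_irrel, sum_const_zero, sum_ite_eq', mem_univ, if_true]
  simp only [eventProb, mul_sum, ite_and, mul_ite, mul_zero]
  rw [sum_comm]
  simp

end EventProb

section HitProb

variable {S : Type*} [Fintype S] {p : Matrix S S ℝ} {x y : S} {k : ℕ}

theorem hitProbEq_nonneg (hp : ∀ a b, 0 ≤ p a b) (x y : S) (k : ℕ) : 0 ≤ hitProbEq p x y k :=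
  eventProb_nonneg hp _

theorem hitProbEq_self_zero : hitProbEq p y y 0 = 1 := by
  simp [hitProbEq, eventProb_zero]

theorem hitProbEq_zero_of_ne (h : x ≠ y) : hitProbEq p x y 0 = 0 := by
  simp [hitProbEq, eventProb_zero, h]

theorem hitProbEq_self_succ : hitProbEq p y y (k + 1) = 0 :=
  eventProb_eq_zero fun _ hz h => h.2 0 k.succ_pos hz

theorem hitProbEq_succ_of_ne (h : x ≠ y) :
    hitProbEq p x y (k + 1) = ∑ v, p x v * hitProbEq p v y k := by
  rw [hitProbEq, eventProb_succ]
  refine sum_congr rfl fun v _ => congrArg _ (eventProb_congr fun u _ => ?_)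
  rw [← Fin.succ_last, Fin.cons_succ, Fin.forall_fin_succ]
  simp [h]

theorem sum_range_hitProbEq_le_one (hp : IsStochastic p) (y : S) (K : ℕ) (x : S) :
    ∑ k ∈ range K, hitProbEq p x y k ≤ 1 := by
  induction K generalizing x with
  | zero => simp
  | succ K ih =>
    rw [sum_range_succ']
    by_cases hx : x = y
    · subst hx
      simp [hitProbEq_self_succ, hitProbEq_self_zero]
    · simp only [hitProbEq_succ_of_ne hx, hitProbEq_zero_of_ne hx, add_zero]
      rw [sum_comm]
      simp only [← mul_sum]
      exact hp.sum_mul_le x ih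

theorem hitProbEq_add_le (hp : IsStochastic p) (y : S) (k s : ℕ) (x : S) :
    hitProbEq p x y (k + s) ≤ ∑ w, hitProbEq p w y k := by
  induction s generalizing x with
  | zero => exact single_le_sum (fun w _ => hitProbEq_nonneg hp.1 w y k) (mem_univ x)
  | succ s ih =>
    by_cases hx : x = y
    · subst hx
      rw [← add_assoc, hitProbEq_self_succ]
      exact sum_nonneg fun w _ => hitProbEq_nonneg hp.1 w x k
    · rw [← add_assoc, hitProbEq_succ_of_ne hx]
      exact hp.sum_mul_le x ih

theorem hitProbEq_le_card_div (hp : IsStochastic p) (x y : S) {t : ℕ} (ht : 0 < t) :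
    hitProbEq p x y t ≤ Fintype.card S / t := by
  have h_restart : ∀ k ∈ range t, hitProbEq p x y t ≤ ∑ w, hitProbEq p w y (k + 1) := by
    intro k hk
    obtain ⟨s, rfl⟩ := Nat.exists_eq_add_of_lt (mem_range.mp hk)
    rw [add_right_comm]
    exact hitProbEq_add_le hp y (k + 1) s x
  have h_tail : ∀ w, ∑ k ∈ range t, hitProbEq p w y (k + 1) ≤ 1 := fun w =>
    calc ∑ k ∈ range t, hitProbEq p w y (k + 1)
        ≤ ∑ k ∈ range (t + 1), hitProbEq p w y k := by
          rw [sum_range_succ']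
          exact le_add_of_nonneg_right (hitProbEq_nonneg hp.1 w y 0)
      _ ≤ 1 := sum_range_hitProbEq_le_one hp y (t + 1) w
  rw [le_div_iff₀' (by exact_mod_cast ht)]
  calc t * hitProbEq p x y t = ∑ _k ∈ range t, hitProbEq p x y t := by simp
    _ ≤ ∑ k ∈ range t, ∑ w, hitProbEq p w y (k + 1) := sum_le_sum h_restart
    _ = ∑ w, ∑ k ∈ range t, hitProbEq p w y (k + 1) := sum_comm
    _ ≤ ∑ _w : S, 1 := sum_le_sum fun w _ => h_tail w
    _ = Fintype.card S := by simp

end HitProb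

theorem surpriseProb_eq_sum_hitProbEq {S : Type*} [Fintype S] (p : Matrix S S ℝ) (x : S) (t : ℕ) :
    surpriseProb p x t = ∑ y, hitProbEq p x y t := by
  simp only [surpriseProb, hitProbEq, eventProb]
  rw [sum_comm]
  refine sum_congr rfl fun z _ => ?_
  rw [sum_eq_single (z (Fin.last t))]
  · congr 1
    simp
  · rintro y - hy
    exact if_neg fun h => hy h.2.1.symm
  · exact fun h => absurd (mem_univ _) h

/-- Proposition 1: for any Markov chain on `n` states and any states `x, y`,
for `t > n` we have `P_x(τ(y) = t) ≤ n / t` and `P_x(S_t) ≤ n² / t`. -/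
theorem surprise_bound_general {S : Type*} [Fintype S] (p : Matrix S S ℝ)
    (hp : IsStochastic p) (x y : S) (t : ℕ) (ht : Fintype.card S < t) :
    hitProbEq p x y t ≤ (Fintype.card S : ℝ) / t ∧
      surpriseProb p x t ≤ (Fintype.card S : ℝ) ^ 2 / t := by
  have ht_pos : 0 < t := (Nat.zero_le _).trans_lt ht
  refine ⟨hitProbEq_le_card_div hp x y ht_pos, ?_⟩
  calc surpriseProb p x t = ∑ y', hitProbEq p x y' t := surpriseProb_eq_sum_hitProbEq p x t
    _ ≤ ∑ _y' : S, (Fintype.card S : ℝ) / t :=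
        sum_le_sum fun y' _ => hitProbEq_le_card_div hp x y' ht_pos
    _ = (Fintype.card S : ℝ) ^ 2 / t := by
        rw [sum_const, card_univ, nsmul_eq_mul]
        ring
end

section
/- Let m > 0 and n > 0 be integers, and let X_1, …, X_n be independent identically distributed geometric random variables with parameter p = n/(m+n). Then (1/3)·√(n/(m(m+n))) ≤ P(X_1 + X_2 + ⋯ + X_n = m) ≤ (1/2)·√(n/(m(m+n))). -/
/-!
The event `∑ Xᵢ = m` is the disjoint union, over the compositions `k` of `m` into `n` parts, of
the events `X = k`, each of probability `p ^ n * (1 - p) ^ m`; there are `(m + n - 1).choose m`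
of them. Writing `k! = sₖ √(2k) (k/e)^k` with the Stirling sequence `sₖ`, this probability is
exactly `s_{m+n} / (√2 sₘ sₙ) * √(n / (m (m + n)))`, and the effective bounds
`√π ≤ sₖ ≤ s₁ = e/√2` place the Stirling factor between `√(2π)/e² > 1/3` and `e/(2π) < 1/2`.
-/

open MeasureTheory ProbabilityTheory Finset Real Stirling
open scoped Nat

lemma Finset.card_piAntidiag_univ_nat {ι : Type*} [Fintype ι] [DecidableEq ι] (m : ℕ) :
    #(piAntidiag (univ : Finset ι) m) = (Fintype.card ι + m - 1).choose m := by
  rw [← map_sym_eq_piAntidiag, card_map, sym_univ, card_univ, Sym.card_sym_eq_choose]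

lemma setOf_sum_eq_eq_biUnion_piAntidiag {ι Ω : Type*} [Fintype ι] [DecidableEq ι]
    (X : ι → Ω → ℕ) (m : ℕ) :
    {ω | ∑ i, X i ω = m} = ⋃ k ∈ piAntidiag univ m, ⋂ i, {ω | X i ω = k i} := by
  ext ω
  simp only [Set.mem_ofPred_eq, Set.mem_iUnion, Set.mem_iInter, exists_prop]
  refine ⟨fun h ↦ ⟨fun i ↦ X i ω, by simpa using h, fun _ ↦ rfl⟩, fun ⟨k, hk, hX⟩ ↦ ?_⟩
  simpa [hX] using (mem_piAntidiag.mp hk).1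

namespace ProbabilityTheory.iIndepFun

variable {ι Ω : Type*} [Fintype ι] [DecidableEq ι] [MeasurableSpace Ω] {μ : Measure Ω}
  {X : ι → Ω → ℕ}

lemma measure_sum_eq (hmeas : ∀ i, Measurable (X i)) (hindep : iIndepFun X μ) (m : ℕ) :
    μ {ω | ∑ i, X i ω = m} = ∑ k ∈ piAntidiag univ m, ∏ i, μ {ω | X i ω = k i} := by
  rw [setOf_sum_eq_eq_biUnion_piAntidiag, measure_biUnion_finset]
  · exact sum_congr rfl fun k _ ↦
      hindep.meas_iInter fun i ↦ ⟨{k i}, measurableSet_singleton _, rfl⟩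
  · intro k _ l _ hkl
    refine Set.disjoint_left.mpr fun ω hk hl ↦ hkl (funext fun i ↦ ?_)
    simp only [Set.mem_iInter, Set.mem_ofPred_eq] at hk hl
    rw [← hk i, ← hl i]
  · exact fun k _ ↦ .iInter fun i ↦ hmeas i (measurableSet_singleton _)

lemma measure_sum_eq_of_geometric [IsFiniteMeasure μ] (hmeas : ∀ i, Measurable (X i))
    (hindep : iIndepFun X μ) {p : ℝ}
    (hgeom : ∀ i k, (μ {ω | X i ω = k}).toReal = p * (1 - p) ^ k) (m : ℕ) :
    (μ {ω | ∑ i, X i ω = m}).toReal =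
      (Fintype.card ι + m - 1).choose m * p ^ Fintype.card ι * (1 - p) ^ m := by
  have hterm : ∀ k ∈ piAntidiag univ m,
      (∏ i, μ {ω | X i ω = k i}).toReal = p ^ Fintype.card ι * (1 - p) ^ m := by
    intro k hk
    rw [mem_piAntidiag] at hk
    simp only [ENNReal.toReal_prod, hgeom, prod_mul_distrib, prod_const, card_univ,
      prod_pow_eq_pow_sum, hk.1]
  rw [hindep.measure_sum_eq hmeas,
    ENNReal.toReal_sum fun k _ ↦ ENNReal.prod_ne_top fun i _ ↦ measure_ne_top μ _,
    sum_congr rfl hterm, sum_const, card_piAntidiag_univ_nat, nsmul_eq_mul, mul_assoc]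

end ProbabilityTheory.iIndepFun

namespace Stirling

lemma stirlingSeq_pos {k : ℕ} (hk : k ≠ 0) : 0 < stirlingSeq k :=
  (sqrt_pos.mpr pi_pos).trans_le (sqrt_pi_le_stirlingSeq hk)

lemma stirlingSeq_le_exp_one_div_sqrt_two {k : ℕ} (hk : k ≠ 0) :
    stirlingSeq k ≤ exp 1 / √2 := by
  obtain ⟨j, rfl⟩ := Nat.exists_eq_succ_of_ne_zero hk
  simpa [stirlingSeq_one] using stirlingSeq'_antitone (Nat.zero_le j)

lemma factorial_eq_stirlingSeq_mul {k : ℕ} (hk : k ≠ 0) :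
    (k ! : ℝ) = stirlingSeq k * (√(2 * k) * (k / exp 1) ^ k) := by
  rw [stirlingSeq, div_mul_cancel₀]
  positivity

lemma cast_choose_add_mul_pow_mul_pow {m n : ℕ} (hm : m ≠ 0) (hn : n ≠ 0) :
    ((m + n).choose m : ℝ) * ((m : ℝ) / (m + n)) ^ m * ((n : ℝ) / (m + n)) ^ n =
      stirlingSeq (m + n) / (stirlingSeq m * stirlingSeq n) * √((m + n) / (2 * m * n)) := by
  have hN : (m + n : ℝ) ≠ 0 := by positivity
  have hpow : ((m + n : ℝ) / exp 1) ^ (m + n) * ((m : ℝ) / (m + n)) ^ m * ((n : ℝ) / (m + n)) ^ n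
      = ((m : ℝ) / exp 1) ^ m * ((n : ℝ) / exp 1) ^ n := by
    rw [pow_add, show ∀ a b c d : ℝ, a * b * c * d = (a * c) * (b * d) from fun _ _ _ _ ↦ by ring,
      ← mul_pow, ← mul_pow]
    congr 2 <;> field_simp
  have hsqrt : √(2 * (m + n : ℝ)) = √((m + n) / (2 * m * n)) * (√(2 * m) * √(2 * n)) := by
    rw [← sqrt_mul (by positivity), ← sqrt_mul (by positivity)]
    congr 1
    field_simp
  rw [Nat.cast_choose ℝ (Nat.le_add_right m n), Nat.add_sub_cancel_left,
    factorial_eq_stirlingSeq_mul hm, factorial_eq_stirlingSeq_mul hn,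
    factorial_eq_stirlingSeq_mul (by omega), Nat.cast_add, hsqrt]
  have := stirlingSeq_pos hm
  have := stirlingSeq_pos hn
  field_simp
  linear_combination stirlingSeq (m + n) * hpow

lemma cast_choose_add_sub_one_mul_pow_mul_pow {m n : ℕ} (hm : m ≠ 0) (hn : n ≠ 0) :
    ((m + n - 1).choose m : ℝ) * ((n : ℝ) / (m + n)) ^ n * ((m : ℝ) / (m + n)) ^ m =
      stirlingSeq (m + n) / (√2 * stirlingSeq m * stirlingSeq n) * √(n / (m * (m + n))) := by
  have hN : (m + n : ℝ) ≠ 0 := by positivity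
  have hchoose : ((m + n - 1).choose m : ℝ) = (m + n).choose m * n / (m + n) := by
    have := Nat.choose_mul_succ_eq (m + n - 1) m
    rw [Nat.sub_add_cancel (by omega), Nat.add_sub_cancel_left] at this
    rw [eq_div_iff hN]
    exact_mod_cast this
  have hsqrt : √(n / (m * (m + n))) = √2 * (n / (m + n) * √((m + n) / (2 * m * n))) := by
    rw [← sqrt_sq (by positivity : (0 : ℝ) ≤ n / (m + n)), ← sqrt_mul (by positivity),
      ← sqrt_mul (by positivity)]
    congr 1
    field_simp
  calc ((m + n - 1).choose m : ℝ) * ((n : ℝ) / (m + n)) ^ n * ((m : ℝ) / (m + n)) ^ m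
      = n / (m + n) *
          (((m + n).choose m : ℝ) * ((m : ℝ) / (m + n)) ^ m * ((n : ℝ) / (m + n)) ^ n) := by
        rw [hchoose]; ring
    _ = n / (m + n) * (stirlingSeq (m + n) / (stirlingSeq m * stirlingSeq n) *
          √((m + n) / (2 * m * n))) := by rw [cast_choose_add_mul_pow_mul_pow hm hn]
    _ = _ := by
        have := stirlingSeq_pos hm
        have := stirlingSeq_pos hn
        rw [hsqrt]
        field_simp

lemma one_third_le_stirlingSeq_div {a b c : ℕ} (ha : a ≠ 0) (hb : b ≠ 0) (hc : c ≠ 0) :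
    1 / 3 ≤ stirlingSeq a / (√2 * stirlingSeq b * stirlingSeq c) := by
  have hb' := stirlingSeq_pos hb
  have hc' := stirlingSeq_pos hc
  rw [le_div_iff₀ (by positivity),
    ← pow_le_pow_iff_left₀ (by positivity) (stirlingSeq_pos ha).le two_ne_zero]
  have hbc : stirlingSeq b * stirlingSeq c ≤ exp 1 ^ 2 / 2 := by
    rw [sq, ← mul_self_sqrt zero_le_two, ← div_mul_div_comm]
    exact mul_le_mul (stirlingSeq_le_exp_one_div_sqrt_two hb)
      (stirlingSeq_le_exp_one_div_sqrt_two hc) hc'.le (by positivity)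
  have he : exp 1 ^ 4 ≤ 18 * π := by
    linarith [pi_gt_d2, pow_le_pow_left₀ (exp_pos 1).le exp_one_lt_d9.le 4]
  calc (1 / 3 * (√2 * stirlingSeq b * stirlingSeq c)) ^ 2
      = 2 / 9 * (stirlingSeq b * stirlingSeq c) ^ 2 := by
        rw [mul_pow, mul_pow, mul_pow, sq_sqrt zero_le_two]; ring
    _ ≤ 2 / 9 * (exp 1 ^ 2 / 2) ^ 2 := by gcongr
    _ = exp 1 ^ 4 / 18 := by ring
    _ ≤ π := by linarith
    _ = √π ^ 2 := (sq_sqrt pi_pos.le).symm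
    _ ≤ stirlingSeq a ^ 2 := by gcongr; exact sqrt_pi_le_stirlingSeq ha

lemma stirlingSeq_div_le_one_half {a b c : ℕ} (ha : a ≠ 0) (hb : b ≠ 0) (hc : c ≠ 0) :
    stirlingSeq a / (√2 * stirlingSeq b * stirlingSeq c) ≤ 1 / 2 := by
  have hb' := stirlingSeq_pos hb
  have hc' := stirlingSeq_pos hc
  rw [div_le_iff₀ (by positivity)]
  have hbc : π ≤ stirlingSeq b * stirlingSeq c := by
    have := mul_le_mul (sqrt_pi_le_stirlingSeq hb) (sqrt_pi_le_stirlingSeq hc)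
      (by positivity) hb'.le
    rwa [mul_self_sqrt pi_pos.le] at this
  have he : exp 1 ≤ π := by linarith [exp_one_lt_d9, pi_gt_d2]
  calc stirlingSeq a ≤ exp 1 / √2 := stirlingSeq_le_exp_one_div_sqrt_two ha
    _ ≤ π / √2 := by gcongr
    _ = 1 / 2 * (√2 * π) := by field_simp; simp
    _ ≤ 1 / 2 * (√2 * (stirlingSeq b * stirlingSeq c)) := by gcongr
    _ = _ := by ring

end Stirling

/-- Lemma 10: if `X_1, …, X_n` are i.i.d. geometric random variables with parameter
`p = n/(m+n)`, then `(1/3)√(n/(m(m+n))) ≤ P(X_1 + ⋯ + X_n = m) ≤ (1/2)√(n/(m(m+n)))`. -/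
theorem iid_geometric_sum_eq_bound {Ω : Type*} [MeasurableSpace Ω]
    (μ : Measure Ω) [IsProbabilityMeasure μ]
    (n m : ℕ) (hn : 0 < n) (hm : 0 < m)
    (X : Fin n → Ω → ℕ) (hmeas : ∀ i, Measurable (X i))
    (hindep : iIndepFun X μ)
    (hgeom : ∀ (i : Fin n) (k : ℕ),
      (μ {ω | X i ω = k}).toReal =
        ((n : ℝ) / (m + n)) * (1 - (n : ℝ) / (m + n)) ^ k) :
    (1 / 3) * Real.sqrt ((n : ℝ) / (m * (m + n))) ≤
        (μ {ω | ∑ i, X i ω = m}).toReal ∧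
      (μ {ω | ∑ i, X i ω = m}).toReal ≤
        (1 / 2) * Real.sqrt ((n : ℝ) / (m * (m + n))) := by
  have hq : 1 - (n : ℝ) / (m + n) = m / (m + n) := by
    field_simp
    ring
  rw [hindep.measure_sum_eq_of_geometric hmeas hgeom, Fintype.card_fin, add_comm n m, hq,
    cast_choose_add_sub_one_mul_pow_mul_pow hm.ne' hn.ne']
  exact ⟨mul_le_mul_of_nonneg_right
      (one_third_le_stirlingSeq_div (by omega) hm.ne' hn.ne') (sqrt_nonneg _),
    mul_le_mul_of_nonneg_right
      (stirlingSeq_div_le_one_half (by omega) hm.ne' hn.ne') (sqrt_nonneg _)⟩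
end
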